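/- Let m be a power of 2 and let S be a set of m + 1 points in ℝ^d no two of which share any coordinate, with sample-point grid G_S. Then there exists a grid covering F(G_S): a finite family of grid-aligned rectangles such that (1) every grid-aligned rectangle contained in the bounding rectangle of S can be written as the union of at most 2^d·(log₂ m)^d pairwise disjoint rectangles from F(G_S), and (2) every point of the bounding rectangle of S is contained in exactly (log₂ m)^d rectangles of F(G_S). -/

import Mathlib

open scoped Classical

/-- A half-open grid-aligned rectangle with respect to the points `s`: a product of
half-open intervals whose endpoints are grid values (coordinates of points of `s`). -/
def GridAlignedIco {d n : ℕ} (s : Fin n → Fin d → ℝ) (R : Set (Fin d → ℝ)) : Prop :=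
  ∃ a b : Fin d → Fin n,
    R = {z | ∀ l, s (a l) l ≤ z l ∧ z l < s (b l) l}

/-- The (half-open) bounding rectangle of the points `s`. -/
noncomputable def boundingBox {d m : ℕ} (s : Fin (m + 1) → Fin d → ℝ) :
    Set (Fin d → ℝ) :=
  {z | ∀ l, (Finset.univ.inf' Finset.univ_nonempty fun j => s j l) ≤ z l ∧
            z l < Finset.univ.sup' Finset.univ_nonempty fun j => s j l}



/-- A dyadic index interval of level `k < t`. -/
def IsDyadic (t : ℕ) (p : ℕ × ℕ) : Prop :=
  ∃ k < t, ∃ j < 2 ^ (t - k), p.1 = j * 2 ^ k ∧ p.2 = (j + 1) * 2 ^ k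

lemma IsDyadic.lt {t p} (h : IsDyadic t p) : p.1 < p.2 := by
  obtain ⟨k, hk, j, hj, h1, h2⟩ := h
  have hpos : 0 < 2 ^ k := by positivity
  rw [h1, h2]
  nlinarith

lemma IsDyadic.le_top {t p} (h : IsDyadic t p) : p.2 ≤ 2 ^ t := by
  obtain ⟨k, hk, j, hj, h1, h2⟩ := h
  have : (j + 1) * 2 ^ k ≤ 2 ^ (t - k) * 2 ^ k := Nat.mul_le_mul_right _ (by omega)
  rw [h2]
  calc (j + 1) * 2 ^ k ≤ 2 ^ (t - k) * 2 ^ k := this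
    _ = 2 ^ t := by rw [← pow_add]; congr 1; omega

lemma IsDyadic.mono {t p} (h : IsDyadic t p) : IsDyadic (t + 1) p := by
  obtain ⟨k, hk, j, hj, h1, h2⟩ := h
  refine ⟨k, by omega, j, ?_, h1, h2⟩
  calc j < 2 ^ (t - k) := hj
    _ ≤ 2 ^ (t + 1 - k) := Nat.pow_le_pow_right (by norm_num) (by omega)

lemma IsDyadic.shift {t p} (h : IsDyadic t p) :
    IsDyadic (t + 1) (p.1 + 2 ^ t, p.2 + 2 ^ t) := by
  obtain ⟨k, hk, j, hj, h1, h2⟩ := h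
  refine ⟨k, by omega, j + 2 ^ (t - k), ?_, ?_, ?_⟩
  · have : 2 ^ (t + 1 - k) = 2 ^ (t - k) + 2 ^ (t - k) := by
      rw [show t + 1 - k = (t - k) + 1 by omega, pow_succ]; ring
    omega
  · simp only [add_mul, h1]
    congr 1
    rw [← pow_add]; congr 1; omega
  · simp only [add_mul, h2]
    have : 2 ^ (t - k) * 2 ^ k = 2 ^ t := by rw [← pow_add]; congr 1; omega
    omega

/-- A decomposition of `[a, b)` into at most `N` pairwise disjoint dyadic intervals. -/
def Decomp (t a b N : ℕ) : Prop :=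
  ∃ P : Finset (ℕ × ℕ),
    (∀ p ∈ P, IsDyadic t p) ∧
    ((P : Set (ℕ × ℕ)).Pairwise fun p q => Disjoint (Set.Ico p.1 p.2) (Set.Ico q.1 q.2)) ∧
    (⋃ p ∈ P, Set.Ico p.1 p.2) = Set.Ico a b ∧
    P.card ≤ N

lemma decomp_empty {t N : ℕ} {a b : ℕ} (h : b ≤ a) : Decomp t a b N := by
  refine ⟨∅, by simp, by simp, ?_, by simp⟩
  rw [Set.Ico_eq_empty (by omega)]
  simp

lemma decomp_single {t a b N : ℕ} (h : IsDyadic t (a, b)) (hN : 1 ≤ N) :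
    Decomp t a b N := by
  refine ⟨{(a, b)}, by simpa using h, by simp, by simp, by simpa⟩

lemma decomp_mono {t a b N : ℕ} (h : Decomp t a b N) : Decomp (t + 1) a b N := by
  obtain ⟨P, h1, h2, h3, h4⟩ := h
  exact ⟨P, fun p hp => (h1 p hp).mono, h2, h3, h4⟩

lemma decomp_weaken {t a b N M : ℕ} (h : Decomp t a b N) (hNM : N ≤ M) :
    Decomp t a b M := by
  obtain ⟨P, h1, h2, h3, h4⟩ := h
  exact ⟨P, h1, h2, h3, h4.trans hNM⟩

lemma decomp_shift {t a b N : ℕ} (h : Decomp t a b N) :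
    Decomp (t + 1) (a + 2 ^ t) (b + 2 ^ t) N := by
  obtain ⟨P, h1, h2, h3, h4⟩ := h
  refine ⟨P.image (fun p => (p.1 + 2 ^ t, p.2 + 2 ^ t)), ?_, ?_, ?_, ?_⟩
  · intro p hp
    simp only [Finset.mem_image] at hp
    obtain ⟨q, hq, rfl⟩ := hp
    exact (h1 q hq).shift
  · intro p hp q hq hpq
    simp only [Finset.coe_image, Set.mem_image] at hp hq
    obtain ⟨p', hp', rfl⟩ := hp
    obtain ⟨q', hq', rfl⟩ := hq
    have hne : p' ≠ q' := by rintro rfl; exact hpq rfl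
    have := h2 hp' hq' hne
    dsimp only at this ⊢
    rw [Set.disjoint_iff_forall_ne] at this ⊢
    intro x hx y hy
    simp only [Set.mem_Ico] at hx hy
    have hx' : x - 2 ^ t ∈ Set.Ico p'.1 p'.2 := by simp only [Set.mem_Ico]; omega
    have hy' : y - 2 ^ t ∈ Set.Ico q'.1 q'.2 := by simp only [Set.mem_Ico]; omega
    have := this hx' hy'
    omega
  · ext x
    simp only [Set.mem_iUnion, Finset.mem_image, Set.mem_Ico, exists_prop]
    constructor
    · rintro ⟨p, ⟨q, hq, rfl⟩, hx⟩
      have : (x - 2 ^ t) ∈ Set.Ico a b := by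
        rw [← h3]
        simp only [Set.mem_iUnion, Set.mem_Ico, exists_prop]
        exact ⟨q, hq, by omega⟩
      simp only [Set.mem_Ico] at this
      omega
    · intro hx
      have : (x - 2 ^ t) ∈ Set.Ico a b := by simp only [Set.mem_Ico]; omega
      rw [← h3] at this
      simp only [Set.mem_iUnion, Set.mem_Ico, exists_prop] at this
      obtain ⟨q, hq, hxq⟩ := this
      exact ⟨_, ⟨q, hq, rfl⟩, by simp; omega⟩
  · exact (Finset.card_image_le).trans h4

lemma decomp_glue {t a c b N M : ℕ} (hac : a ≤ c) (hcb : c ≤ b)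
    (h1 : Decomp t a c N) (h2 : Decomp t c b M) : Decomp t a b (N + M) := by
  obtain ⟨P, hP1, hP2, hP3, hP4⟩ := h1
  obtain ⟨Q, hQ1, hQ2, hQ3, hQ4⟩ := h2
  have hPsub : ∀ p ∈ P, Set.Ico (p.1:ℕ) p.2 ⊆ Set.Ico a c := by
    intro p hp
    intro x hx
    rw [← hP3]
    exact Set.mem_biUnion hp hx
  have hQsub : ∀ p ∈ Q, Set.Ico (p.1:ℕ) p.2 ⊆ Set.Ico c b := by
    intro p hp
    intro x hx
    rw [← hQ3]
    exact Set.mem_biUnion hp hx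
  have hPQdisj : Disjoint P Q := by
    rw [Finset.disjoint_left]
    intro p hp hq
    have h1 := hPsub p hp
    have h2 := hQsub p hq
    have hlt := (hP1 p hp).lt
    have : p.1 ∈ Set.Ico (p.1:ℕ) p.2 := by simp [hlt]
    have ha := h1 this
    have hb := h2 this
    simp only [Set.mem_Ico] at ha hb
    omega
  refine ⟨P ∪ Q, ?_, ?_, ?_, ?_⟩
  · intro p hp
    rcases Finset.mem_union.1 hp with h | h
    exacts [hP1 p h, hQ1 p h]
  · intro p hp q hq hpq
    simp only [Finset.coe_union, Set.mem_union, Finset.mem_coe] at hp hq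
    have key : ∀ u v : ℕ × ℕ, u ∈ P → v ∈ Q →
        Disjoint (Set.Ico (u.1:ℕ) u.2) (Set.Ico (v.1:ℕ) v.2) := by
      intro u v hu hv
      exact Set.disjoint_of_subset (hPsub u hu) (hQsub v hv)
        (Set.Ico_disjoint_Ico_same)
    rcases hp with hp | hp <;> rcases hq with hq | hq
    · exact hP2 hp hq hpq
    · exact key p q hp hq
    · exact (key q p hq hp).symm
    · exact hQ2 hp hq hpq
  · rw [Finset.set_biUnion_union, hP3, hQ3, Set.Ico_union_Ico_eq_Ico hac hcb]
  · rw [Finset.card_union_of_disjoint hPQdisj]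
    omega

/-- Suffix decomposition: `[a, 2^t)` is a union of at most `t` dyadic intervals. -/
lemma decomp_suffix (t : ℕ) : ∀ a, 0 < a → a ≤ 2 ^ t → Decomp t a (2 ^ t) t := by
  induction t with
  | zero => intro a h1 h2; interval_cases a; exact decomp_empty le_rfl
  | succ t ih =>
    intro a h1 h2
    rcases lt_trichotomy a (2 ^ t) with h | h | h
    · -- a < 2^t : suffix of left half plus right half
      have left : Decomp (t + 1) a (2 ^ t) t := decomp_mono (ih a h1 (le_of_lt h))
      have right : Decomp (t + 1) (2 ^ t) (2 ^ (t + 1)) 1 :=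
        decomp_single ⟨t, by omega, 1, by
          simpa using Nat.one_lt_two_pow (by omega), by simp, by simp [pow_succ]; ring⟩ le_rfl
      exact decomp_glue (le_of_lt h) (by rw [pow_succ]; omega) left right
    · subst h
      have : Decomp (t + 1) (2 ^ t) (2 ^ (t + 1)) 1 :=
        decomp_single ⟨t, by omega, 1, by
          simpa using Nat.one_lt_two_pow (by omega), by simp, by simp [pow_succ]; ring⟩ le_rfl
      exact decomp_weaken this (by omega)
    · -- a > 2^t : shift
      rcases eq_or_lt_of_le h2 with h2 | h2
      · exact decomp_empty (le_of_eq h2.symm)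
      have : Decomp t (a - 2 ^ t) (2 ^ t) t := ih _ (by omega) (by rw [pow_succ] at h2; omega)
      have := decomp_shift this
      rw [show a - 2 ^ t + 2 ^ t = a by omega, show 2 ^ t + 2 ^ t = 2 ^ (t+1) by rw [pow_succ]; ring] at this
      exact decomp_weaken this (by omega)

/-- Prefix decomposition: `[0, b)` with `b < 2^t` is a union of at most `t` dyadic intervals. -/
lemma decomp_prefix (t : ℕ) : ∀ b, b < 2 ^ t → Decomp t 0 b t := by
  induction t with
  | zero => intro b h; interval_cases b; exact decomp_empty le_rfl
  | succ t ih =>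
    intro b hb
    rcases lt_trichotomy b (2 ^ t) with h | h | h
    · exact decomp_weaken (decomp_mono (ih b h)) (by omega)
    · subst h
      exact decomp_single ⟨t, by omega, 0, by positivity, by simp, by simp⟩ (by omega)
    · have left : Decomp (t + 1) 0 (2 ^ t) 1 :=
        decomp_single ⟨t, by omega, 0, by positivity, by simp, by simp⟩ le_rfl
      have right : Decomp t 0 (b - 2 ^ t) t := ih _ (by rw [pow_succ] at hb; omega)
      have right := decomp_shift right
      rw [show (0:ℕ) + 2 ^ t = 2 ^ t by omega,
        show b - 2 ^ t + 2 ^ t = b by omega] at right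
      exact decomp_weaken (decomp_glue (Nat.zero_le _) (by omega) left right) (by omega)

/-- Main decomposition: any `[a, b) ⊆ [0, 2^t)` is a union of at most `2t` dyadic intervals. -/
lemma decomp_main : ∀ t, 1 ≤ t → ∀ a b, b ≤ 2 ^ t → Decomp t a b (2 * t) := by
  intro t
  induction t with
  | zero => omega
  | succ t ih =>
    intro _ a b hb
    rcases le_or_gt b a with h | hab
    · exact decomp_empty h
    rcases Nat.eq_zero_or_pos t with rfl | ht
    · -- t + 1 = 1 : b ≤ 2
      norm_num at hb
      have ha2 : a < 2 := by omega
      interval_cases a <;> interval_cases b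
      · exact decomp_single ⟨0, by omega, 0, by norm_num, by simp, by simp⟩ (by omega)
      · -- [0, 2)
        exact decomp_weaken (decomp_glue (show (0:ℕ) ≤ 1 by omega) (by omega)
          (decomp_single (N := 1) ⟨0, by omega, 0, by norm_num, by simp, by simp⟩ le_rfl)
          (decomp_single (N := 1) ⟨0, by omega, 1, by norm_num, by simp, by simp⟩ le_rfl))
          (by omega)
      · exact decomp_single ⟨0, by omega, 1, by norm_num, by simp, by simp⟩ (by omega)
    rcases le_or_gt b (2 ^ t) with hble | hbgt
    · exact decomp_weaken (decomp_mono (ih ht a b hble)) (by omega)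
    rcases le_or_gt (2 ^ t) a with hage | halt
    · have : Decomp t (a - 2 ^ t) (b - 2 ^ t) (2 * t) :=
        ih ht _ _ (by rw [pow_succ] at hb; omega)
      have := decomp_shift this
      rw [show a - 2 ^ t + 2 ^ t = a by omega, show b - 2 ^ t + 2 ^ t = b by omega] at this
      exact decomp_weaken this (by omega)
    · -- a < 2^t < b
      have left : Decomp (t + 1) a (2 ^ t) (t + 1) := by
        rcases Nat.eq_zero_or_pos a with rfl | ha
        · exact decomp_single ⟨t, by omega, 0, by positivity, by simp, by simp⟩ (by omega)
        · exact decomp_weaken (decomp_mono (decomp_suffix t a ha (le_of_lt halt))) (by omega)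
      have right : Decomp (t + 1) (2 ^ t) b (t + 1) := by
        rcases eq_or_lt_of_le hb with rfl | hb2
        · exact decomp_single ⟨t, by omega, 1, by
            simpa using Nat.one_lt_two_pow (by omega), by simp, by simp [pow_succ]; ring⟩
            (by omega)
        · have := decomp_shift (decomp_prefix t (b - 2 ^ t) (by rw [pow_succ] at hb2; omega))
          rw [show (0:ℕ) + 2 ^ t = 2 ^ t by omega, show b - 2 ^ t + 2 ^ t = b by omega] at this
          exact decomp_weaken this (by omega)
      exact decomp_weaken (decomp_glue (le_of_lt halt) (le_of_lt hbgt) left right)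
        (by omega)

/-! ### Part B: real-valued one-dimensional lemmas -/

/-- The finset of dyadic index pairs at scale `t`. -/
def dyadicFinset (t : ℕ) : Finset (ℕ × ℕ) :=
  ((Finset.range t).sigma fun k => Finset.range (2 ^ (t - k))).image
    fun q => (q.2 * 2 ^ q.1, (q.2 + 1) * 2 ^ q.1)

lemma mem_dyadicFinset {t : ℕ} {p : ℕ × ℕ} : p ∈ dyadicFinset t ↔ IsDyadic t p := by
  simp only [dyadicFinset, Finset.mem_image, Finset.mem_sigma, Finset.mem_range, IsDyadic]
  constructor
  · rintro ⟨⟨k, j⟩, ⟨hk, hj⟩, rfl⟩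
    exact ⟨k, hk, j, hj, rfl, rfl⟩
  · rintro ⟨k, hk, j, hj, h1, h2⟩
    exact ⟨⟨k, j⟩, ⟨hk, hj⟩, by rw [Prod.ext_iff]; exact ⟨h1.symm, h2.symm⟩⟩

/-- Locate the grid cell containing `y`. -/
lemma find_index (x : ℕ → ℝ) (hmono : Monotone x) {u v : ℕ} {y : ℝ}
    (huv : u < v) (h1 : x u ≤ y) (h2 : y < x v) :
    ∃ i, u ≤ i ∧ i < v ∧ x i ≤ y ∧ y < x (i + 1) := by
  set T := (Finset.range v).filter (fun i => x i ≤ y) with hT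
  have hu : u ∈ T := by simp [hT, huv, h1]
  have hne : T.Nonempty := ⟨u, hu⟩
  set i := T.max' hne with hi
  have hiT : i ∈ T := T.max'_mem hne
  simp only [hT, Finset.mem_filter, Finset.mem_range] at hiT
  refine ⟨i, ?_, hiT.1, hiT.2, ?_⟩
  · exact Finset.le_max' T u hu
  · by_contra hcon
    push_neg at hcon
    rcases lt_or_ge (i + 1) v with h3 | h3
    · have : i + 1 ∈ T := by simp [hT, h3, hcon]
      have := Finset.le_max' T _ this
      omega
    · have hv : v = i + 1 := by omega
      rw [hv] at h2
      exact absurd h2 (not_lt.2 hcon)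

/-- Transfer a union-of-intervals identity from indices to reals. -/
lemma real_cover (x : ℕ → ℝ) (hmono : Monotone x) {P : Finset (ℕ × ℕ)} {a b : ℕ}
    (hne : ∀ p ∈ P, p.1 < p.2)
    (hU : (⋃ p ∈ P, Set.Ico (p.1 : ℕ) p.2) = Set.Ico a b) (y : ℝ) :
    (x a ≤ y ∧ y < x b) ↔ ∃ p ∈ P, x p.1 ≤ y ∧ y < x p.2 := by
  constructor
  · rintro ⟨hy1, hy2⟩
    have hab : a < b := by
      by_contra hcon
      push_neg at hcon
      exact absurd (lt_of_le_of_lt hy1 hy2) (not_lt.2 (hmono hcon))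
    obtain ⟨i, hui, hiv, hxi, hxi2⟩ := find_index x hmono hab hy1 hy2
    have : (i : ℕ) ∈ Set.Ico a b := by simp [hui, hiv]
    rw [← hU] at this
    simp only [Set.mem_iUnion, Set.mem_Ico, exists_prop] at this
    obtain ⟨p, hp, hp1, hp2⟩ := this
    exact ⟨p, hp, le_trans (hmono hp1) hxi, lt_of_lt_of_le hxi2 (hmono (by omega))⟩
  · rintro ⟨p, hp, hy1, hy2⟩
    have hsub : Set.Ico (p.1 : ℕ) p.2 ⊆ Set.Ico a b := by
      intro w hw
      rw [← hU]
      exact Set.mem_biUnion hp hw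
    have hplt := hne p hp
    have h1 : p.1 ∈ Set.Ico a b := hsub (by simp [hplt])
    have h2 : p.2 - 1 ∈ Set.Ico a b := hsub (by simp only [Set.mem_Ico]; omega)
    simp only [Set.mem_Ico] at h1 h2
    exact ⟨le_trans (hmono h1.1) hy1, lt_of_lt_of_le hy2 (hmono (by omega))⟩

/-- Transfer disjointness from index intervals to real intervals. -/
lemma real_disjoint (x : ℕ → ℝ) (hmono : Monotone x) {p q : ℕ × ℕ}
    (hp : p.1 < p.2) (hq : q.1 < q.2)
    (h : Disjoint (Set.Ico (p.1 : ℕ) p.2) (Set.Ico (q.1 : ℕ) q.2)) :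
    Disjoint (Set.Ico (x p.1) (x p.2)) (Set.Ico (x q.1) (x q.2)) := by
  have key : p.2 ≤ q.1 ∨ q.2 ≤ p.1 := by
    by_contra hcon
    push_neg at hcon
    have : max p.1 q.1 ∈ Set.Ico (p.1 : ℕ) p.2 ∩ Set.Ico (q.1 : ℕ) q.2 := by
      simp only [Set.mem_inter_iff, Set.mem_Ico]
      omega
    rw [Set.disjoint_iff_inter_eq_empty] at h
    rw [h] at this
    exact this
  rw [Set.Ico_disjoint_Ico]
  rcases key with h | h
  · calc min (x p.2) (x q.2) ≤ x p.2 := min_le_left _ _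
      _ ≤ x q.1 := hmono h
      _ ≤ max (x p.1) (x q.1) := le_max_right _ _
  · calc min (x p.2) (x q.2) ≤ x q.2 := min_le_right _ _
      _ ≤ x p.1 := hmono h
      _ ≤ max (x p.1) (x q.1) := le_max_left _ _

/-- Each point of `[x 0, x (2^t))` lies in exactly `t` dyadic real intervals. -/
lemma dyadic_count (t : ℕ) (x : ℕ → ℝ) (hmono : Monotone x) {y : ℝ}
    (h1 : x 0 ≤ y) (h2 : y < x (2 ^ t)) :
    ((dyadicFinset t).filter fun p => x p.1 ≤ y ∧ y < x p.2).card = t := by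
  obtain ⟨i, -, hi2t, hxi, hxi1⟩ :=
    find_index x hmono (show 0 < 2 ^ t by positivity) h1 h2
  have key : (dyadicFinset t).filter (fun p => x p.1 ≤ y ∧ y < x p.2) =
      (Finset.range t).image fun k => (i / 2 ^ k * 2 ^ k, (i / 2 ^ k + 1) * 2 ^ k) := by
    ext p
    simp only [Finset.mem_filter, mem_dyadicFinset, Finset.mem_image, Finset.mem_range]
    constructor
    · rintro ⟨⟨k, hk, j, hj, hp1, hp2⟩, hy1, hy2⟩
      have hpos : 0 < 2 ^ k := by positivity
      have htop : p.2 ≤ 2 ^ t := IsDyadic.le_top ⟨k, hk, j, hj, hp1, hp2⟩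
      -- x p.1 ≤ y < x (i+1) forces p.1 ≤ i; x i ≤ y < x p.2 forces i < p.2
      have hle : p.1 ≤ i := by
        by_contra hcon
        push_neg at hcon
        exact absurd (lt_of_le_of_lt hy1 hxi1) (not_lt.2 (hmono (by omega)))
      have hlt : i < p.2 := by
        by_contra hcon
        push_neg at hcon
        exact absurd (lt_of_le_of_lt (le_trans (hmono hcon) hxi) hy2) (lt_irrefl _)
      have hdiv : i / 2 ^ k = j := by
        apply Nat.div_eq_of_lt_le
        · omega
        · rw [Nat.succ_mul] at *; omega
      refine ⟨k, hk, ?_⟩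
      rw [hdiv, Prod.ext_iff]
      exact ⟨hp1.symm, hp2.symm⟩
    · rintro ⟨k, hk, rfl⟩
      have hpos : 0 < 2 ^ k := by positivity
      have hjlt : i / 2 ^ k < 2 ^ (t - k) := by
        rw [Nat.div_lt_iff_lt_mul hpos, ← pow_add]
        rw [show t - k + k = t by omega]
        exact hi2t
      have hd : IsDyadic t (i / 2 ^ k * 2 ^ k, (i / 2 ^ k + 1) * 2 ^ k) :=
        ⟨k, hk, i / 2 ^ k, hjlt, rfl, rfl⟩
      have hple : i / 2 ^ k * 2 ^ k ≤ i := Nat.div_mul_le_self i (2 ^ k)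
      have hplt : i < (i / 2 ^ k + 1) * 2 ^ k := by
        have := Nat.lt_div_mul_add (a := i) hpos
        rw [Nat.add_mul]
        omega
      refine ⟨hd, ?_, ?_⟩
      · exact le_trans (hmono hple) hxi
      · exact lt_of_lt_of_le hxi1 (hmono (by omega))
  rw [key, Finset.card_image_of_injOn, Finset.card_range]
  intro k hk k' hk' heq
  simp only [Prod.ext_iff] at heq
  have h2k : i / 2 ^ k * 2 ^ k + 2 ^ k = i / 2 ^ k' * 2 ^ k' + 2 ^ k' := by
    have e1 := heq.1
    have e2 := heq.2
    rw [Nat.succ_mul, Nat.succ_mul] at e2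
    omega
  have : (2:ℕ) ^ k = 2 ^ k' := by omega
  exact Nat.pow_right_injective (by norm_num) this

/-! ### Part C: rectangles -/

def rectOf (d : ℕ) (x : Fin d → ℕ → ℝ) (c : Fin d → ℕ × ℕ) : Set (Fin d → ℝ) :=
  {z | ∀ l, x l (c l).1 ≤ z l ∧ z l < x l (c l).2}

lemma rectOf_inj {d M : ℕ} (x : Fin d → ℕ → ℝ)
    (hmono : ∀ l, Monotone (x l))
    (hstrict : ∀ l, ∀ i j : ℕ, i < j → j ≤ M → x l i < x l j)
    {c c' : Fin d → ℕ × ℕ}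
    (hc : ∀ l, (c l).1 < (c l).2 ∧ (c l).2 ≤ M)
    (hc' : ∀ l, (c' l).1 < (c' l).2 ∧ (c' l).2 ≤ M)
    (h : rectOf d x c = rectOf d x c') : c = c' := by
  classical
  have xinj : ∀ l, ∀ i j : ℕ, i ≤ M → j ≤ M → x l i = x l j → i = j := by
    intro l i j hi hj hxx
    rcases lt_trichotomy i j with hlt | heq | hlt
    · exact absurd hxx (ne_of_lt (hstrict l i j hlt hj))
    · exact heq
    · exact absurd hxx.symm (ne_of_lt (hstrict l j i hlt hi))
  have base : ∀ (cc : Fin d → ℕ × ℕ), (∀ l, (cc l).1 < (cc l).2 ∧ (cc l).2 ≤ M) →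
      (fun l => x l (cc l).1) ∈ rectOf d x cc := by
    intro cc hcc l
    exact ⟨le_rfl, hstrict l _ _ (hcc l).1 (hcc l).2⟩
  have sub : ∀ (c₁ c₂ : Fin d → ℕ × ℕ), (∀ l, (c₁ l).1 < (c₁ l).2 ∧ (c₁ l).2 ≤ M) →
      rectOf d x c₁ = rectOf d x c₂ → ∀ l,
      Set.Ico (x l (c₁ l).1) (x l (c₁ l).2) ⊆ Set.Ico (x l (c₂ l).1) (x l (c₂ l).2) := by
    intro c₁ c₂ hc₁ heq l y hy
    simp only [Set.mem_Ico] at hy ⊢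
    have hzmem : Function.update (fun l' => x l' (c₁ l').1) l y ∈ rectOf d x c₁ := by
      intro l'
      rcases eq_or_ne l' l with rfl | hne
      · simpa using hy
      · simpa [Function.update_of_ne hne] using base c₁ hc₁ l'
    rw [heq] at hzmem
    simpa using hzmem l
  funext l
  have h1 := sub c c' hc h l
  have h2 := sub c' c hc' h.symm l
  have hIco := Set.Subset.antisymm h1 h2
  have hlt : x l (c l).1 < x l (c l).2 := hstrict l _ _ (hc l).1 (hc l).2
  obtain ⟨e1, e2⟩ := (Set.Ico_eq_Ico_iff (Or.inl hlt)).1 hIco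
  have hcl := hc l
  have hcl' := hc' l
  have q1 : (c l).1 = (c' l).1 := xinj l _ _ (by omega) (by omega) e1
  have q2 : (c l).2 = (c' l).2 := xinj l _ _ (by omega) (by omega) e2
  exact Prod.ext q1 q2

/-- **Lemma 2.6: existence of a grid covering.**
Let `m = 2^t` (with `t ≥ 1`) and let `S` be a set of `m + 1` points in `ℝ^d` no two of
which share any coordinate. Then there is a finite family `F` of grid-aligned rectangles
such that every grid-aligned rectangle contained in the bounding rectangle of `S` is the
union of at most `2^d·t^d` pairwise disjoint members of `F`, and every point of the
bounding rectangle lies in exactly `t^d` members of `F`. -/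
theorem grid_covering_exists (d t : ℕ) (ht : 1 ≤ t)
    (s : Fin (2 ^ t + 1) → Fin d → ℝ)
    (hdist : ∀ i j, i ≠ j → ∀ l, s i l ≠ s j l) :
    ∃ F : Finset (Set (Fin d → ℝ)),
      (∀ R ∈ F, GridAlignedIco s R) ∧
      (∀ R : Set (Fin d → ℝ), GridAlignedIco s R → R ⊆ boundingBox s →
        ∃ G ⊆ F, G.card ≤ 2 ^ d * t ^ d ∧
          ((G : Set (Set (Fin d → ℝ))).Pairwise fun A B => Disjoint A B) ∧
          ⋃₀ (G : Set (Set (Fin d → ℝ))) = R) ∧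
      (∀ z ∈ boundingBox s, (F.filter fun R => z ∈ R).card = t ^ d) := by
  classical
  have hinj : ∀ l : Fin d, Function.Injective (fun j : Fin (2 ^ t + 1) => s j l) := by
    intro l i j hij
    by_contra h
    exact hdist i j h l hij
  set V : Fin d → Finset ℝ := fun l => Finset.image (fun j => s j l) Finset.univ with hV
  have hVcard : ∀ l, (V l).card = 2 ^ t + 1 := by
    intro l
    simp only [hV]
    rw [Finset.card_image_of_injective _ (hinj l), Finset.card_univ, Fintype.card_fin]
  set x : Fin d → ℕ → ℝ := fun l i =>
    ((V l).orderIsoOfFin (hVcard l) ⟨min i (2 ^ t), by omega⟩ : ℝ) with hx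
  have hxmono : ∀ l, Monotone (x l) := by
    intro l i j hij
    simp only [hx]
    apply Subtype.coe_le_coe.2
    apply ((V l).orderIsoOfFin (hVcard l)).monotone
    simp only [Fin.mk_le_mk]
    omega
  have hxstrict : ∀ l, ∀ i j : ℕ, i < j → j ≤ 2 ^ t → x l i < x l j := by
    intro l i j hij hj
    simp only [hx]
    apply Subtype.coe_lt_coe.2
    apply ((V l).orderIsoOfFin (hVcard l)).strictMono
    simp only [Fin.mk_lt_mk]
    omega
  have hxmem : ∀ l (i : ℕ), ∃ j : Fin (2 ^ t + 1), s j l = x l i := by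
    intro l i
    have hmem : x l i ∈ V l := by
      simp only [hx]
      exact Subtype.coe_prop _
    simp only [hV, Finset.mem_image, Finset.mem_univ, true_and] at hmem
    exact hmem
  have hxsurj : ∀ l (j : Fin (2 ^ t + 1)), ∃ i : ℕ, i ≤ 2 ^ t ∧ x l i = s j l := by
    intro l j
    have hmem : s j l ∈ V l := by
      simp only [hV]
      exact Finset.mem_image_of_mem _ (Finset.mem_univ j)
    set k := ((V l).orderIsoOfFin (hVcard l)).symm ⟨s j l, hmem⟩ with hk
    have hklt := k.isLt
    refine ⟨k.val, by omega, ?_⟩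
    simp only [hx]
    have hfin : (⟨min k.val (2 ^ t), by omega⟩ : Fin (2 ^ t + 1)) = k := by
      apply Fin.ext
      simp only
      omega
    rw [hfin, hk]
    simp
  have hxmin : ∀ l, x l 0 = Finset.univ.inf' Finset.univ_nonempty fun j => s j l := by
    intro l
    apply le_antisymm
    · apply Finset.le_inf'
      intro j _
      obtain ⟨i, hi, hxi⟩ := hxsurj l j
      rw [← hxi]
      exact hxmono l (Nat.zero_le i)
    · obtain ⟨j, hj⟩ := hxmem l 0
      rw [← hj]
      exact Finset.inf'_le (fun j => s j l) (Finset.mem_univ j)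
  have hxmax : ∀ l, x l (2 ^ t) = Finset.univ.sup' Finset.univ_nonempty fun j => s j l := by
    intro l
    apply le_antisymm
    · obtain ⟨j, hj⟩ := hxmem l (2 ^ t)
      rw [← hj]
      exact Finset.le_sup' (fun j => s j l) (Finset.mem_univ j)
    · apply Finset.sup'_le
      intro j _
      obtain ⟨i, hi, hxi⟩ := hxsurj l j
      rw [← hxi]
      exact hxmono l hi
  have hbb : ∀ z : Fin d → ℝ, z ∈ boundingBox s ↔ ∀ l, x l 0 ≤ z l ∧ z l < x l (2 ^ t) := by
    intro z
    simp only [boundingBox, Set.mem_setOf_eq]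
    constructor
    · intro h l
      rw [hxmin l, hxmax l]
      exact h l
    · intro h l
      rw [← hxmin l, ← hxmax l]
      exact h l
  refine ⟨(Fintype.piFinset fun _ : Fin d => dyadicFinset t).image (rectOf d x), ?_, ?_, ?_⟩
  · -- members are grid aligned
    intro R hR
    simp only [Finset.mem_image] at hR
    obtain ⟨c, hc, rfl⟩ := hR
    refine ⟨fun l => (hxmem l (c l).1).choose, fun l => (hxmem l (c l).2).choose, ?_⟩
    ext z
    simp only [rectOf, Set.mem_setOf_eq]
    refine forall_congr' fun l => ?_
    rw [(hxmem l (c l).1).choose_spec, (hxmem l (c l).2).choose_spec]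
  · -- decomposition
    intro R hgrid hsubbb
    obtain ⟨a, b, rfl⟩ := hgrid
    by_cases hne : ({z : Fin d → ℝ | ∀ l, s (a l) l ≤ z l ∧ z l < s (b l) l}).Nonempty
    case neg =>
      refine ⟨∅, Finset.empty_subset _, by simp, by simp, ?_⟩
      rw [Set.not_nonempty_iff_eq_empty] at hne
      simp [hne]
    obtain ⟨z₀, hz₀⟩ := hne
    choose α hα1 hα2 using fun l => hxsurj l (a l)
    choose β hβ1 hβ2 using fun l => hxsurj l (b l)
    have hαβ : ∀ l, α l < β l := by
      intro l
      by_contra hcon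
      push_neg at hcon
      have hle : x l (β l) ≤ x l (α l) := hxmono l hcon
      rw [hα2, hβ2] at hle
      have hzl := hz₀ l
      linarith [hzl.1, hzl.2]
    have hdec := fun l => decomp_main t ht (α l) (β l) (hβ1 l)
    choose P hPdy hPdisj hPunion hPcard using hdec
    refine ⟨(Fintype.piFinset P).image (rectOf d x), ?_, ?_, ?_, ?_⟩
    · apply Finset.image_subset_image
      apply Fintype.piFinset_subset
      intro l p hp
      exact mem_dyadicFinset.2 (hPdy l p hp)
    · calc ((Fintype.piFinset P).image (rectOf d x)).card
          ≤ (Fintype.piFinset P).card := Finset.card_image_le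
        _ = ∏ l, (P l).card := Fintype.card_piFinset P
        _ ≤ ∏ _l : Fin d, (2 * t) :=
            Finset.prod_le_prod (fun _ _ => Nat.zero_le _) (fun l _ => hPcard l)
        _ = (2 * t) ^ d := by rw [Finset.prod_const, Finset.card_univ, Fintype.card_fin]
        _ = 2 ^ d * t ^ d := mul_pow 2 t d
    · -- pairwise disjoint
      intro A hA B hB hAB
      simp only [Finset.coe_image, Set.mem_image, Finset.mem_coe] at hA hB
      obtain ⟨c, hc, rfl⟩ := hA
      obtain ⟨c', hc', rfl⟩ := hB
      have hcc : c ≠ c' := fun hcc => hAB (by rw [hcc])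
      obtain ⟨l₀, hl₀⟩ : ∃ l, c l ≠ c' l := by
        by_contra hcon
        push_neg at hcon
        exact hcc (funext hcon)
      rw [Fintype.mem_piFinset] at hc hc'
      have hd1 := hPdy l₀ _ (hc l₀)
      have hd2 := hPdy l₀ _ (hc' l₀)
      have hidx : Disjoint (Set.Ico ((c l₀).1 : ℕ) (c l₀).2)
          (Set.Ico ((c' l₀).1 : ℕ) (c' l₀).2) :=
        hPdisj l₀ (hc l₀) (hc' l₀) hl₀
      have hreal := real_disjoint (x l₀) (hxmono l₀) hd1.lt hd2.lt hidx
      rw [Set.disjoint_left]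
      intro z hz1 hz2
      have e1 := hz1 l₀
      have e2 := hz2 l₀
      exact Set.disjoint_left.1 hreal (Set.mem_Ico.2 e1) (Set.mem_Ico.2 e2)
    · -- union
      ext z
      constructor
      · intro hzz
        obtain ⟨A, hA, hzA⟩ := hzz
        simp only [Finset.coe_image, Set.mem_image, Finset.mem_coe] at hA
        obtain ⟨c, hc, rfl⟩ := hA
        rw [Fintype.mem_piFinset] at hc
        simp only [Set.mem_setOf_eq]
        intro l
        have hcover := (real_cover (x l) (hxmono l)
          (fun p hp => (hPdy l p hp).lt) (hPunion l) (z l)).2 ⟨c l, hc l, hzA l⟩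
        rw [hα2 l, hβ2 l] at hcover
        exact hcover
      · intro hzz
        simp only [Set.mem_setOf_eq] at hzz
        have hzl : ∀ l, ∃ p ∈ P l, x l p.1 ≤ z l ∧ z l < x l p.2 := by
          intro l
          apply (real_cover (x l) (hxmono l)
            (fun p hp => (hPdy l p hp).lt) (hPunion l) (z l)).1
          rw [hα2 l, hβ2 l]
          exact hzz l
        choose c hcmem hcz using hzl
        refine Set.mem_sUnion.2 ⟨rectOf d x c, ?_, fun l => hcz l⟩
        simp only [Finset.coe_image, Set.mem_image, Finset.mem_coe]
        exact ⟨c, Fintype.mem_piFinset.2 hcmem, rfl⟩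
  · -- exact count
    intro z hz
    rw [hbb z] at hz
    have hElem : ∀ c ∈ Fintype.piFinset (fun _ : Fin d => dyadicFinset t),
        ∀ l, (c l).1 < (c l).2 ∧ (c l).2 ≤ 2 ^ t := by
      intro c hc l
      rw [Fintype.mem_piFinset] at hc
      have hd := mem_dyadicFinset.1 (hc l)
      exact ⟨hd.lt, hd.le_top⟩
    have hinjOn : Set.InjOn (rectOf d x)
        (Fintype.piFinset (fun _ : Fin d => dyadicFinset t)) := by
      intro c hc c' hc' heq
      exact rectOf_inj x hxmono hxstrict
        (hElem c (Finset.mem_coe.1 hc)) (hElem c' (Finset.mem_coe.1 hc')) heq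
    rw [Finset.filter_image]
    rw [Finset.card_image_of_injOn
      (hinjOn.mono (Finset.coe_subset.2 (Finset.filter_subset _ _)))]
    have hsplit : (Fintype.piFinset (fun _ : Fin d => dyadicFinset t)).filter
          (fun c => z ∈ rectOf d x c)
        = Fintype.piFinset (fun l => (dyadicFinset t).filter
            fun p => x l p.1 ≤ z l ∧ z l < x l p.2) := by
      ext c
      simp only [Finset.mem_filter, Fintype.mem_piFinset, rectOf, Set.mem_setOf_eq]
      constructor
      · rintro ⟨h1, h2⟩ l
        exact ⟨h1 l, h2 l⟩
      · intro h
        exact ⟨fun l => (h l).1, fun l => (h l).2⟩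
    rw [hsplit, Fintype.card_piFinset]
    have hcnt : ∀ l, ((dyadicFinset t).filter
        fun p => x l p.1 ≤ z l ∧ z l < x l p.2).card = t := fun l =>
      dyadic_count t (x l) (hxmono l) (hz l).1 (hz l).2
    rw [Finset.prod_congr rfl (fun l _ => hcnt l), Finset.prod_const,
      Finset.card_univ, Fintype.card_fin]
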